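/- Let (y^k, z^k, x^k)_{k≥0} be an sPADMM sequence with 0 < τ < (1+√5)/2, and assume T^{-1}(0) is nonempty. Then d₁ := D_M(w^1, w^0) satisfies d₁ ≤ (1/2)·Σ_{i=1}^3 dist²_{Hᵢ}(w^0, T^{-1}(0)), and η₁ ≤ max(1/(2τ²), 2)·Σ_{i=1}^3 dist²_{Hᵢ}(w^0, T^{-1}(0)), where H₁ := Diag(2(S + Σ_{ϑf} + 4βAA*), 7βBB*, 7β^{-1}I), H₂ := Diag(28(S + Σ_{ϑf} + 5βAA*), 2(T₀ + Σ_{φg} + 53βBB*), 105β^{-1}I), and H₃ := 4τ·Diag(30(S + Σ_{ϑf} + 5βAA*), 2(T₀ + Σ_{φg} + 57βBB*), 112β^{-1}I). -/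
import Mathlib


open scoped RealInnerProductSpace

noncomputable section

/-- The subdifferential of a function `f : Y → ℝ ∪ {+∞}` (encoded with values in `EReal`). -/
def subdiff {Y : Type*} [NormedAddCommGroup Y] [InnerProductSpace ℝ Y]
    (f : Y → EReal) (y : Y) : Set Y :=
  {ξ | ∀ y', f y + ((⟪ξ, y' - y⟫ : ℝ) : EReal) ≤ f y'}


private lemma flip_inner {Y : Type*} [NormedAddCommGroup Y] [InnerProductSpace ℝ Y]
    (S : Y →ₗ[ℝ] Y) (hS : LinearMap.IsSymmetric S) (a b : Y) : ⟪a, S b⟫ = ⟪b, S a⟫ := by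
  rw [← hS]; exact real_inner_comm _ _

private lemma young11 {Y : Type*} [NormedAddCommGroup Y] [InnerProductSpace ℝ Y]
    (S : Y →ₗ[ℝ] Y) (hS : LinearMap.IsSymmetric S) (hpsd : ∀ v, 0 ≤ ⟪S v, v⟫) (a b : Y) :
    ⟪b, S a⟫ ≤ (1/2)*⟪a, S a⟫ + (1/2)*⟪b, S b⟫ := by
  have h := hpsd (a - b)
  have e : ⟪S (a-b), a-b⟫ = ⟪a, S a⟫ - 2*⟪b, S a⟫ + ⟪b, S b⟫ := by
    simp only [map_sub, inner_sub_left, inner_sub_right]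
    linarith [real_inner_comm (S a) a, real_inner_comm (S a) b, real_inner_comm (S b) a,
      real_inner_comm (S b) b, flip_inner S hS a b]
  linarith [h, e]

private lemma young32 {Y : Type*} [NormedAddCommGroup Y] [InnerProductSpace ℝ Y]
    (S : Y →ₗ[ℝ] Y) (hS : LinearMap.IsSymmetric S) (hpsd : ∀ v, 0 ≤ ⟪S v, v⟫) (a b : Y) :
    ⟪b, S a⟫ ≤ (3/4)*⟪a, S a⟫ + (1/3)*⟪b, S b⟫ := by
  have h := hpsd ((3:ℝ)•a - (2:ℝ)•b)
  have e : ⟪S ((3:ℝ)•a - (2:ℝ)•b), (3:ℝ)•a - (2:ℝ)•b⟫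
      = 9*⟪a, S a⟫ - 12*⟪b, S a⟫ + 4*⟪b, S b⟫ := by
    simp only [map_sub, map_smul, inner_sub_left, inner_sub_right, real_inner_smul_left,
      real_inner_smul_right]
    linarith [real_inner_comm (S a) a, real_inner_comm (S a) b, real_inner_comm (S b) a,
      real_inner_comm (S b) b, flip_inner S hS a b]
  linarith [h, e]

private lemma youngQ {Y : Type*} [NormedAddCommGroup Y] [InnerProductSpace ℝ Y]
    (S : Y →ₗ[ℝ] Y) (hS : LinearMap.IsSymmetric S) (hpsd : ∀ v, 0 ≤ ⟪S v, v⟫) (a b : Y) :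
    ⟪a + b, S (a + b)⟫ ≤ 2*⟪a, S a⟫ + 2*⟪b, S b⟫ := by
  have h := hpsd (a - b)
  have e : ⟪S (a-b), a-b⟫ = ⟪a, S a⟫ - 2*⟪b, S a⟫ + ⟪b, S b⟫ := by
    simp only [map_sub, inner_sub_left, inner_sub_right]
    linarith [real_inner_comm (S a) a, real_inner_comm (S a) b, real_inner_comm (S b) a,
      real_inner_comm (S b) b, flip_inner S hS a b]
  have e2 : ⟪a + b, S (a + b)⟫ = ⟪a, S a⟫ + 2*⟪b, S a⟫ + ⟪b, S b⟫ := by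
    simp only [map_add, inner_add_left, inner_add_right]
    linarith [real_inner_comm (S a) b, flip_inner S hS a b,
      real_inner_comm a (S b)]
  linarith [h, e, e2]

private lemma psdflip {Y : Type*} [NormedAddCommGroup Y] [InnerProductSpace ℝ Y]
    (S : Y →ₗ[ℝ] Y) (hpsd : ∀ v, 0 ≤ ⟪S v, v⟫) (w : Y) : 0 ≤ ⟪w, S w⟫ := by
  rw [real_inner_comm]; exact hpsd w

private lemma iInf_sqrt_sq_ge {ι : Sort*} [Nonempty ι] (f : ι → ℝ) (m : ℝ) (hm : 0 ≤ m)
    (h : ∀ i, m ≤ f i) : m ≤ (⨅ i, Real.sqrt (f i))^2 := by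
  have h1 : Real.sqrt m ≤ ⨅ i, Real.sqrt (f i) := le_ciInf fun i => Real.sqrt_le_sqrt (h i)
  calc m = Real.sqrt m ^ 2 := (Real.sq_sqrt hm).symm
  _ ≤ _ := pow_le_pow_left₀ (Real.sqrt_nonneg m) h1 2

private lemma core {X : Type*} [NormedAddCommGroup X] [InnerProductSpace ℝ X]
    (β : ℝ) (hβ : 0 < β) (p r a b0 bD : X) (ha : a = r - bD + b0)
    (GY GZ A1 A2 A3 B1 B2 B3 : ℝ)
    (hI : GY ≤ ⟪p, a⟫ - β*⟪a - b0, a⟫ - A1 + A2)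
    (hII : GZ ≤ ⟪p, bD - b0⟫ - β*⟪r, bD - b0⟫ - B1 + B2)
    (hA : A2 ≤ (1/2)*A1 + (1/2)*A3)
    (hB : B2 ≤ (3/4)*B1 + (1/3)*B3) :
    GY + GZ + (1/2)*A1 + (1/4)*B1 + (27/100)*(β*‖r‖^2) + (1/6)*(β*‖bD‖^2)
      ≤ (25/23)*(β⁻¹*‖p‖^2) + (3/4)*(β*‖b0‖^2) + (1/2)*A3 + (1/3)*B3 := by
  have hsum : ⟪p, a⟫ + ⟪p, bD - b0⟫ = ⟪p, r⟫ := by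
    rw [← inner_add_right]
    congr 1
    rw [ha]; abel
  have hquad : ⟪a - b0, a⟫ + ⟪r, bD - b0⟫ = ‖r‖^2 + ‖bD‖^2 - ⟪bD, r⟫ - ⟪bD, b0⟫ := by
    rw [ha, show r - bD + b0 - b0 = r - bD by abel]
    simp only [inner_sub_left, inner_sub_right, inner_add_right, real_inner_self_eq_norm_sq]
    ring
  have hY5 : ⟪p, r⟫ ≤ (23/100)*(β*‖r‖^2) + (25/23)*(β⁻¹*‖p‖^2) := by
    have h0 : (0:ℝ) ≤ ‖((23/50)*β)•r - p‖^2 := by positivity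
    rw [norm_sub_sq_real, real_inner_smul_left, norm_smul, Real.norm_eq_abs,
      abs_of_pos (by positivity : (0:ℝ) < (23/50)*β)] at h0
    have hm := mul_le_mul_of_nonneg_left
      (by linarith : 2*((23/50)*β*⟪r,p⟫) ≤ ((23/50)*β*‖r‖)^2 + ‖p‖^2)
      (by positivity : (0:ℝ) ≤ (25/23)*β⁻¹)
    have e1 : (25/23)*β⁻¹*(2*((23/50)*β*⟪r,p⟫)) = ⟪r,p⟫ := by
      field_simp
      ring
    have e2 : (25/23)*β⁻¹*(((23/50)*β*‖r‖)^2 + ‖p‖^2)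
        = (23/100)*(β*‖r‖^2) + (25/23)*(β⁻¹*‖p‖^2) := by
      field_simp
      ring
    rw [e1, e2] at hm
    linarith [real_inner_comm p r]
  have hY6 : β*⟪bD, r⟫ ≤ (1/2)*(β*‖r‖^2) + (1/2)*(β*‖bD‖^2) := by
    have h0 : (0:ℝ) ≤ ‖bD - r‖^2 := by positivity
    rw [norm_sub_sq_real] at h0
    have h1 : ⟪bD, r⟫ ≤ (1/2)*‖r‖^2 + (1/2)*‖bD‖^2 := by linarith
    have := mul_le_mul_of_nonneg_left h1 hβ.le
    linarith [this]
  have hY7 : β*⟪bD, b0⟫ ≤ (1/3)*(β*‖bD‖^2) + (3/4)*(β*‖b0‖^2) := by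
    have h0 : (0:ℝ) ≤ ⟪(2:ℝ)•bD - (3:ℝ)•b0, (2:ℝ)•bD - (3:ℝ)•b0⟫ := real_inner_self_nonneg
    simp only [inner_sub_left, inner_sub_right, real_inner_smul_left,
      real_inner_smul_right] at h0
    have h1 : ⟪bD, b0⟫ ≤ (1/3)*‖bD‖^2 + (3/4)*‖b0‖^2 := by
      linarith [real_inner_comm bD b0, real_inner_self_eq_norm_sq bD,
        real_inner_self_eq_norm_sq b0]
    have := mul_le_mul_of_nonneg_left h1 hβ.le
    linarith [this]
  have e : β*⟪a - b0, a⟫ + β*⟪r, bD - b0⟫ = β*(‖r‖^2 + ‖bD‖^2 - ⟪bD,r⟫ - ⟪bD,b0⟫) := by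
    rw [← mul_add, hquad]
  linarith [hI, hII, hsum, e, hY5, hY6, hY7, hA, hB]

set_option maxHeartbeats 1000000 in
theorem sPADMM_d1_eta1_bound
    {Y Z X : Type*}
    [NormedAddCommGroup Y] [InnerProductSpace ℝ Y] [FiniteDimensional ℝ Y]
    [NormedAddCommGroup Z] [InnerProductSpace ℝ Z] [FiniteDimensional ℝ Z]
    [NormedAddCommGroup X] [InnerProductSpace ℝ X] [FiniteDimensional ℝ X]
    (ϑf : Y → EReal) (φg : Z → EReal)
    (hϑbot : ∀ v, ϑf v ≠ ⊥) (hϑproper : ∃ v, ϑf v ≠ ⊤)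
    (hϑlsc : LowerSemicontinuous ϑf)
    (hϑconvex : ∀ (v v' : Y) (a b : ℝ), 0 ≤ a → 0 ≤ b → a + b = 1 →
      ϑf (a • v + b • v') ≤ (a : EReal) * ϑf v + (b : EReal) * ϑf v')
    (hφbot : ∀ v, φg v ≠ ⊥) (hφproper : ∃ v, φg v ≠ ⊤)
    (hφlsc : LowerSemicontinuous φg)
    (hφconvex : ∀ (v v' : Z) (a b : ℝ), 0 ≤ a → 0 ≤ b → a + b = 1 →
      φg (a • v + b • v') ≤ (a : EReal) * φg v + (b : EReal) * φg v')
    (A : X →ₗ[ℝ] Y) (B : X →ₗ[ℝ] Z) (c : X)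
    (β τ : ℝ) (hβ : 0 < β) (hτ : 0 < τ)
    (S : Y →ₗ[ℝ] Y) (hSsym : LinearMap.IsSymmetric S) (hSpsd : ∀ v, 0 ≤ ⟪S v, v⟫)
    (T₀ : Z →ₗ[ℝ] Z) (hTsym : LinearMap.IsSymmetric T₀) (hTpsd : ∀ v, 0 ≤ ⟪T₀ v, v⟫)
    (hτub : τ < (1 + Real.sqrt 5) / 2)
    (SigY : Y →ₗ[ℝ] Y) (hSigYsym : LinearMap.IsSymmetric SigY)
    (hSigYpsd : ∀ v, 0 ≤ ⟪SigY v, v⟫)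
    (hSigYmono : ∀ (y₁ y₂ ξ₁ ξ₂ : Y), ξ₁ ∈ subdiff ϑf y₁ → ξ₂ ∈ subdiff ϑf y₂ →
      ⟪y₁ - y₂, SigY (y₁ - y₂)⟫ ≤ ⟪ξ₁ - ξ₂, y₁ - y₂⟫)
    (SigZ : Z →ₗ[ℝ] Z) (hSigZsym : LinearMap.IsSymmetric SigZ)
    (hSigZpsd : ∀ v, 0 ≤ ⟪SigZ v, v⟫)
    (hSigZmono : ∀ (z₁ z₂ η₁ η₂ : Z), η₁ ∈ subdiff φg z₁ → η₂ ∈ subdiff φg z₂ →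
      ⟪z₁ - z₂, SigZ (z₁ - z₂)⟫ ≤ ⟪η₁ - η₂, z₁ - z₂⟫)
    (y : ℕ → Y) (z : ℕ → Z) (x : ℕ → X)
    (hADMMy : ∀ k : ℕ,
      -(A (x k)) - β • A (LinearMap.adjoint A (y (k+1)) + LinearMap.adjoint B (z k) - c)
        - S (y (k+1) - y k) ∈ subdiff ϑf (y (k+1)))
    (hADMMz : ∀ k : ℕ,
      -(B (x k)) - β • B (LinearMap.adjoint A (y (k+1)) + LinearMap.adjoint B (z (k+1)) - c)
        - T₀ (z (k+1) - z k) ∈ subdiff φg (z (k+1)))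
    (hADMMx : ∀ k : ℕ,
      x (k+1) = x k + (τ * β) • (LinearMap.adjoint A (y (k+1)) + LinearMap.adjoint B (z (k+1)) - c))
    (σ ν γ : ℝ)
    (hσ : σ = max ((2 - τ) / 2) ((1 + τ * (τ - 1) ^ 2) / (2 - (1 - τ) ^ 2)))
    (hν : ν = σ * (τ + 1) + τ - 1)
    (hγ : γ = min (min (τ ^ 2 * σ) (σ - (τ + 1) * (τ - 1) ^ 2) / (τ * (σ - (τ - 1) ^ 2)))
      (τ * σ / ν))
    (et : ℕ → ℝ)
    (het : ∀ k : ℕ, et (k+1) =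
      (σ - (τ - 1) ^ 2) * β / (2 * τ) *
          ‖LinearMap.adjoint A (y (k+1)) + LinearMap.adjoint B (z (k+1)) - c‖ ^ 2
        + σ / 2 * ⟪y (k+1) - y k, S (y (k+1) - y k)⟫
        + ν / (2 * τ) * ⟪z (k+1) - z k, T₀ (z (k+1) - z k)⟫
        + (σ + τ - 1) / τ * ⟪z (k+1) - z k, SigZ (z (k+1) - z k)⟫)
    (eta : ℕ → ℝ)
    (heta : ∀ k : ℕ, eta (k+1) = et (k+1)
      + (1/4) * (⟪y (k+1) - y k, SigY (y (k+1) - y k)⟫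
        + ⟪z (k+1) - z k, SigZ (z (k+1) - z k)⟫))
    (DM : Y × Z × X → Y × Z × X → ℝ)
    (hDM : ∀ w w' : Y × Z × X, DM w w' =
      (1/2) * (⟪w.1 - w'.1, S (w.1 - w'.1) + SigY (w.1 - w'.1)⟫
      + ⟪w.2.1 - w'.2.1, T₀ (w.2.1 - w'.2.1) + β • B (LinearMap.adjoint B (w.2.1 - w'.2.1))
          + SigZ (w.2.1 - w'.2.1)⟫
      + (τ * β)⁻¹ * ‖w.2.2 - w'.2.2‖ ^ 2))
    (KKT : Y × Z × X → Prop)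
    (hKKT : ∀ w : Y × Z × X, KKT w ↔
      (-(A w.2.2) ∈ subdiff ϑf w.1 ∧ -(B w.2.2) ∈ subdiff φg w.2.1 ∧
        LinearMap.adjoint A w.1 + LinearMap.adjoint B w.2.1 = c))
    (hne : ∃ w, KKT w)
    (H1sq : Y → Z → X → ℝ)
    (hH1 : ∀ (vy : Y) (vz : Z) (vx : X), H1sq vy vz vx =
      2 * (⟪vy, S vy⟫ + ⟪vy, SigY vy⟫ + 4 * β * ‖LinearMap.adjoint A vy‖ ^ 2)
        + 7 * β * ‖LinearMap.adjoint B vz‖ ^ 2 + 7 * β⁻¹ * ‖vx‖ ^ 2)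
    (H2sq : Y → Z → X → ℝ)
    (hH2 : ∀ (vy : Y) (vz : Z) (vx : X), H2sq vy vz vx =
      28 * (⟪vy, S vy⟫ + ⟪vy, SigY vy⟫ + 5 * β * ‖LinearMap.adjoint A vy‖ ^ 2)
        + 2 * (⟪vz, T₀ vz⟫ + ⟪vz, SigZ vz⟫ + 53 * β * ‖LinearMap.adjoint B vz‖ ^ 2)
        + 105 * β⁻¹ * ‖vx‖ ^ 2)
    (H3sq : Y → Z → X → ℝ)
    (hH3 : ∀ (vy : Y) (vz : Z) (vx : X), H3sq vy vz vx =
      4 * τ * (30 * (⟪vy, S vy⟫ + ⟪vy, SigY vy⟫ + 5 * β * ‖LinearMap.adjoint A vy‖ ^ 2)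
        + 2 * (⟪vz, T₀ vz⟫ + ⟪vz, SigZ vz⟫ + 57 * β * ‖LinearMap.adjoint B vz‖ ^ 2)
        + 112 * β⁻¹ * ‖vx‖ ^ 2))
    (d1 : ℝ) (hd1 : d1 = DM (y 1, z 1, x 1) (y 0, z 0, x 0)) :
    d1 ≤ (1/2) * ((⨅ w : {w : Y × Z × X // KKT w},
      Real.sqrt (H1sq (w.1.1 - y 0) (w.1.2.1 - z 0) (w.1.2.2 - x 0))) ^ 2
        + (⨅ w : {w : Y × Z × X // KKT w},
      Real.sqrt (H2sq (w.1.1 - y 0) (w.1.2.1 - z 0) (w.1.2.2 - x 0))) ^ 2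
        + (⨅ w : {w : Y × Z × X // KKT w},
      Real.sqrt (H3sq (w.1.1 - y 0) (w.1.2.1 - z 0) (w.1.2.2 - x 0))) ^ 2) ∧
      eta 1 ≤ max (1 / (2 * τ ^ 2)) 2 * ((⨅ w : {w : Y × Z × X // KKT w},
      Real.sqrt (H1sq (w.1.1 - y 0) (w.1.2.1 - z 0) (w.1.2.2 - x 0))) ^ 2
        + (⨅ w : {w : Y × Z × X // KKT w},
      Real.sqrt (H2sq (w.1.1 - y 0) (w.1.2.1 - z 0) (w.1.2.2 - x 0))) ^ 2
        + (⨅ w : {w : Y × Z × X // KKT w},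
      Real.sqrt (H3sq (w.1.1 - y 0) (w.1.2.1 - z 0) (w.1.2.2 - x 0))) ^ 2) := by
  have hβne := hβ.ne'
  have hτne := hτ.ne'
  have h81 : τ ≤ 81/50 := by
    nlinarith only [Real.sq_sqrt (show (0:ℝ) ≤ 5 by norm_num),
      sq_nonneg (Real.sqrt 5 - 56/25), hτub, hτ]
  have hq : τ^2 ≤ τ + 1 := by
    nlinarith only [Real.sq_sqrt (show (0:ℝ) ≤ 5 by norm_num), Real.sqrt_nonneg 5,
      sq_nonneg (Real.sqrt 5 - (2*τ - 1)), hτub, hτ]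
  have hden : 0 < 2 - (1-τ)^2 := by
    nlinarith only [mul_le_mul_of_nonneg_right h81 hτ.le, hτ]
  have hσ1 : σ ≤ 1 := by
    rw [hσ]
    apply max_le (by linarith only [hτ])
    rw [div_le_one hden]
    nlinarith only [mul_nonneg hτ.le (by linarith only [hq] : (0:ℝ) ≤ τ + 1 - τ^2)]
  have hcube : (0:ℝ) ≤ τ^3 - 3*τ^2 + 2*τ + 1 := by
    nlinarith only [mul_nonneg hτ.le (sq_nonneg (τ - 8/5)), sq_nonneg (τ - 7/5), hτ]
  have hσmq : (τ-1)^2 ≤ σ := by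
    rw [hσ]
    refine le_max_of_le_right ?_
    rw [le_div_iff₀ hden]
    nlinarith only [mul_nonneg hτ.le hcube]
  have hσlb : (2-τ)/2 ≤ σ := hσ ▸ le_max_left _ _
  have hσnn : 0 ≤ σ := le_trans (sq_nonneg _) hσmq
  have hν2τ : ν ≤ 2*τ := by
    rw [hν]
    nlinarith only [mul_le_mul_of_nonneg_right hσ1 (by linarith only [hτ] : (0:ℝ) ≤ τ + 1)]
  have hνnn : 0 ≤ ν := by
    rw [hν]
    nlinarith only [mul_le_mul_of_nonneg_right hσlb (by linarith only [hτ] : (0:ℝ) ≤ τ + 1),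
      mul_nonneg hτ.le (by linarith only [h81] : (0:ℝ) ≤ 3 - τ)]
  have hστ1 : σ + τ - 1 ≤ τ := by linarith only [hσ1]
  have hστnn : 0 ≤ σ + τ - 1 := by linarith only [hσlb, hτ]
  -- expansion of d1
  have hx1 : x 1 - x 0
      = (τ*β) • (LinearMap.adjoint A (y 1) + LinearMap.adjoint B (z 1) - c) := by
    have h := hADMMx 0
    simp only [Nat.zero_add] at h
    rw [h]
    abel
  have hd1' : 2*d1 = ⟪y 1 - y 0, S (y 1 - y 0)⟫ + ⟪y 1 - y 0, SigY (y 1 - y 0)⟫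
      + ⟪z 1 - z 0, T₀ (z 1 - z 0)⟫ + ⟪z 1 - z 0, SigZ (z 1 - z 0)⟫
      + β*‖LinearMap.adjoint B (z 1 - z 0)‖^2
      + τ*(β*‖LinearMap.adjoint A (y 1) + LinearMap.adjoint B (z 1) - c‖^2) := by
    rw [hd1, hDM]
    dsimp only
    rw [hx1, norm_smul, mul_pow, Real.norm_eq_abs, sq_abs]
    have e2 : ⟪z 1 - z 0, T₀ (z 1 - z 0) + β • B (LinearMap.adjoint B (z 1 - z 0))
          + SigZ (z 1 - z 0)⟫
        = ⟪z 1 - z 0, T₀ (z 1 - z 0)⟫ + β*‖LinearMap.adjoint B (z 1 - z 0)‖^2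
          + ⟪z 1 - z 0, SigZ (z 1 - z 0)⟫ := by
      rw [inner_add_right, inner_add_right, real_inner_smul_right,
        ← LinearMap.adjoint_inner_left B, real_inner_self_eq_norm_sq]
    rw [e2, inner_add_right]
    field_simp
    ring
  have het1 := het 0
  have heta1 := heta 0
  simp only [Nat.zero_add] at het1 heta1
  rw [het1] at heta1
  -- nonnegativity facts at the iterates
  have nA1 : 0 ≤ ⟪y 1 - y 0, S (y 1 - y 0)⟫ := psdflip S hSpsd _
  have nB1 : 0 ≤ ⟪z 1 - z 0, T₀ (z 1 - z 0)⟫ := psdflip T₀ hTpsd _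
  have nG1 : 0 ≤ ⟪y 1 - y 0, SigY (y 1 - y 0)⟫ := psdflip SigY hSigYpsd _
  have nH1 : 0 ≤ ⟪z 1 - z 0, SigZ (z 1 - z 0)⟫ := psdflip SigZ hSigZpsd _
  have nNR : (0:ℝ) ≤ ‖LinearMap.adjoint A (y 1) + LinearMap.adjoint B (z 1) - c‖^2 := by
    positivity
  have nNB : (0:ℝ) ≤ ‖LinearMap.adjoint B (z 1 - z 0)‖^2 := by positivity
  have hd1nn : 0 ≤ d1 := by
    linarith only [hd1', mul_nonneg hβ.le nNB, mul_nonneg hτ.le (mul_nonneg hβ.le nNR),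
      nA1, nB1, nG1, nH1]
  have hetann : 0 ≤ eta 1 := by
    have t1 : 0 ≤ (σ - (τ-1)^2)*β/(2*τ)
        *‖LinearMap.adjoint A (y 1) + LinearMap.adjoint B (z 1) - c‖^2 :=
      mul_nonneg (div_nonneg (mul_nonneg (by linarith only [hσmq]) hβ.le) (by positivity)) nNR
    have t2 : 0 ≤ σ/2*⟪y 1 - y 0, S (y 1 - y 0)⟫ := mul_nonneg (by linarith only [hσnn]) nA1
    have t3 : 0 ≤ ν/(2*τ)*⟪z 1 - z 0, T₀ (z 1 - z 0)⟫ :=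
      mul_nonneg (div_nonneg hνnn (by positivity)) nB1
    have t4 : 0 ≤ (σ+τ-1)/τ*⟪z 1 - z 0, SigZ (z 1 - z 0)⟫ :=
      mul_nonneg (div_nonneg hστnn hτ.le) nH1
    linarith only [heta1, t1, t2, t3, t4, nG1, nH1]
  -- the main per-KKT-point bound
  have hmain : ∀ yb zb xb, -(A xb) ∈ subdiff ϑf yb → -(B xb) ∈ subdiff φg zb →
      LinearMap.adjoint A yb + LinearMap.adjoint B zb = c →
      2*d1 ≤ H2sq (yb - y 0) (zb - z 0) (xb - x 0) ∧
        eta 1 ≤ max (1/(2*τ^2)) 2 * H3sq (yb - y 0) (zb - z 0) (xb - x 0) := by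
    intro yb zb xb hξb hηb hcb
    have hy1mem := hADMMy 0
    have hz1mem := hADMMz 0
    simp only [Nat.zero_add] at hy1mem hz1mem
    -- inequality from the y-update
    have hI0 := hSigYmono (y 1) yb _ (-(A xb)) hy1mem hξb
    have hveq : (-(A (x 0)) - β • A (LinearMap.adjoint A (y 1) + LinearMap.adjoint B (z 0) - c)
        - S (y 1 - y 0)) - (-(A xb))
        = A (xb - x 0) - β • A (LinearMap.adjoint A (y 1 - yb) - LinearMap.adjoint B (zb - z 0))
          - S (y 1 - y 0) := by
      have h1 : LinearMap.adjoint A (y 1) + LinearMap.adjoint B (z 0) - c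
          = LinearMap.adjoint A (y 1 - yb) - LinearMap.adjoint B (zb - z 0) := by
        rw [map_sub, map_sub, ← hcb]
        abel
      rw [h1, map_sub A xb (x 0)]
      abel
    rw [hveq] at hI0
    have hIrhs : ⟪A (xb - x 0) - β • A (LinearMap.adjoint A (y 1 - yb)
          - LinearMap.adjoint B (zb - z 0)) - S (y 1 - y 0), y 1 - yb⟫
        = ⟪xb - x 0, LinearMap.adjoint A (y 1 - yb)⟫
          - β*⟪LinearMap.adjoint A (y 1 - yb) - LinearMap.adjoint B (zb - z 0),
              LinearMap.adjoint A (y 1 - yb)⟫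
          - ⟪y 1 - y 0, S (y 1 - y 0)⟫ + ⟪yb - y 0, S (y 1 - y 0)⟫ := by
      have e1 : ⟪A (xb - x 0), y 1 - yb⟫ = ⟪xb - x 0, LinearMap.adjoint A (y 1 - yb)⟫ :=
        (LinearMap.adjoint_inner_right _ _ _).symm
      have e2 : ⟪A (LinearMap.adjoint A (y 1 - yb) - LinearMap.adjoint B (zb - z 0)), y 1 - yb⟫
          = ⟪LinearMap.adjoint A (y 1 - yb) - LinearMap.adjoint B (zb - z 0),
              LinearMap.adjoint A (y 1 - yb)⟫ := (LinearMap.adjoint_inner_right _ _ _).symm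
      have e3 : ⟪S (y 1 - y 0), y 1 - yb⟫
          = ⟪y 1 - y 0, S (y 1 - y 0)⟫ - ⟪yb - y 0, S (y 1 - y 0)⟫ := by
        rw [real_inner_comm, show (y 1 : Y) - yb = (y 1 - y 0) - (yb - y 0) from by abel,
          inner_sub_left]
      rw [inner_sub_left, inner_sub_left, real_inner_smul_left, e1, e2, e3]
      ring
    rw [hIrhs] at hI0
    -- inequality from the z-update
    have hII0 := hSigZmono (z 1) zb _ (-(B xb)) hz1mem hηb
    have hveqz : (-(B (x 0)) - β • B (LinearMap.adjoint A (y 1) + LinearMap.adjoint B (z 1) - c)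
        - T₀ (z 1 - z 0)) - (-(B xb))
        = B (xb - x 0) - β • B (LinearMap.adjoint A (y 1) + LinearMap.adjoint B (z 1) - c)
          - T₀ (z 1 - z 0) := by
      rw [map_sub B xb (x 0)]
      abel
    rw [hveqz] at hII0
    have hbz : LinearMap.adjoint B (z 1 - zb)
        = LinearMap.adjoint B (z 1 - z 0) - LinearMap.adjoint B (zb - z 0) := by
      rw [← map_sub]
      congr 1
      abel
    have hIIrhs : ⟪B (xb - x 0) - β • B (LinearMap.adjoint A (y 1) + LinearMap.adjoint B (z 1) - c)
          - T₀ (z 1 - z 0), z 1 - zb⟫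
        = ⟪xb - x 0, LinearMap.adjoint B (z 1 - z 0) - LinearMap.adjoint B (zb - z 0)⟫
          - β*⟪LinearMap.adjoint A (y 1) + LinearMap.adjoint B (z 1) - c,
              LinearMap.adjoint B (z 1 - z 0) - LinearMap.adjoint B (zb - z 0)⟫
          - ⟪z 1 - z 0, T₀ (z 1 - z 0)⟫ + ⟪zb - z 0, T₀ (z 1 - z 0)⟫ := by
      have e1 : ⟪B (xb - x 0), z 1 - zb⟫ = ⟪xb - x 0, LinearMap.adjoint B (z 1 - zb)⟫ :=
        (LinearMap.adjoint_inner_right _ _ _).symm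
      have e2 : ⟪B (LinearMap.adjoint A (y 1) + LinearMap.adjoint B (z 1) - c), z 1 - zb⟫
          = ⟪LinearMap.adjoint A (y 1) + LinearMap.adjoint B (z 1) - c,
              LinearMap.adjoint B (z 1 - zb)⟫ := (LinearMap.adjoint_inner_right _ _ _).symm
      have e3 : ⟪T₀ (z 1 - z 0), z 1 - zb⟫
          = ⟪z 1 - z 0, T₀ (z 1 - z 0)⟫ - ⟪zb - z 0, T₀ (z 1 - z 0)⟫ := by
        rw [real_inner_comm, show (z 1 : Z) - zb = (z 1 - z 0) - (zb - z 0) from by abel,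
          inner_sub_left]
      rw [inner_sub_left, inner_sub_left, real_inner_smul_left, e1, e2, e3, hbz]
      ring
    rw [hIIrhs] at hII0
    -- apply the core estimate
    have ha : LinearMap.adjoint A (y 1 - yb)
        = (LinearMap.adjoint A (y 1) + LinearMap.adjoint B (z 1) - c)
          - LinearMap.adjoint B (z 1 - z 0) + LinearMap.adjoint B (zb - z 0) := by
      simp only [map_sub]
      rw [← hcb]
      abel
    have hYA := young11 S hSsym hSpsd (y 1 - y 0) (yb - y 0)
    have hYB := young32 T₀ hTsym hTpsd (z 1 - z 0) (zb - z 0)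
    have hM := core β hβ (xb - x 0)
      (LinearMap.adjoint A (y 1) + LinearMap.adjoint B (z 1) - c)
      (LinearMap.adjoint A (y 1 - yb)) (LinearMap.adjoint B (zb - z 0))
      (LinearMap.adjoint B (z 1 - z 0)) ha _ _ _ _ _ _ _ _ hI0 hII0 hYA hYB
    -- Young for the proximal terms
    have hYG : ⟪y 1 - y 0, SigY (y 1 - y 0)⟫
        ≤ 2*⟪y 1 - yb, SigY (y 1 - yb)⟫ + 2*⟪yb - y 0, SigY (yb - y 0)⟫ := by
      rw [show (y 1 : Y) - y 0 = (y 1 - yb) + (yb - y 0) from by abel]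
      exact youngQ SigY hSigYsym hSigYpsd _ _
    have hYH : ⟪z 1 - z 0, SigZ (z 1 - z 0)⟫
        ≤ 2*⟪z 1 - zb, SigZ (z 1 - zb)⟫ + 2*⟪zb - z 0, SigZ (zb - z 0)⟫ := by
      rw [show (z 1 : Z) - z 0 = (z 1 - zb) + (zb - z 0) from by abel]
      exact youngQ SigZ hSigZsym hSigZpsd _ _
    -- nonnegativity of the KKT-side quantities
    have nA3 : 0 ≤ ⟪yb - y 0, S (yb - y 0)⟫ := psdflip S hSpsd _
    have nB3 : 0 ≤ ⟪zb - z 0, T₀ (zb - z 0)⟫ := psdflip T₀ hTpsd _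
    have nG0 : 0 ≤ ⟪yb - y 0, SigY (yb - y 0)⟫ := psdflip SigY hSigYpsd _
    have nH0 : 0 ≤ ⟪zb - z 0, SigZ (zb - z 0)⟫ := psdflip SigZ hSigZpsd _
    have nGu : 0 ≤ ⟪y 1 - yb, SigY (y 1 - yb)⟫ := psdflip SigY hSigYpsd _
    have nHv : 0 ≤ ⟪z 1 - zb, SigZ (z 1 - zb)⟫ := psdflip SigZ hSigZpsd _
    have nβNA0 : (0:ℝ) ≤ β*‖LinearMap.adjoint A (yb - y 0)‖^2 :=
      mul_nonneg hβ.le (by positivity)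
    have nβNB0 : (0:ℝ) ≤ β*‖LinearMap.adjoint B (zb - z 0)‖^2 :=
      mul_nonneg hβ.le (by positivity)
    have nβNB : (0:ℝ) ≤ β*‖LinearMap.adjoint B (z 1 - z 0)‖^2 := mul_nonneg hβ.le nNB
    have nβNR : (0:ℝ) ≤ β*‖LinearMap.adjoint A (y 1) + LinearMap.adjoint B (z 1) - c‖^2 :=
      mul_nonneg hβ.le nNR
    have nβiNP : (0:ℝ) ≤ β⁻¹*‖xb - x 0‖^2 := mul_nonneg (by positivity) (by positivity)
    constructor
    · -- d1 bound
      rw [hH2]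
      have hτNR : τ*(β*‖LinearMap.adjoint A (y 1) + LinearMap.adjoint B (z 1) - c‖^2)
          ≤ (81/50)*(β*‖LinearMap.adjoint A (y 1) + LinearMap.adjoint B (z 1) - c‖^2) :=
        mul_le_mul_of_nonneg_right h81 nβNR
      linarith only [hM, hYG, hYH, hd1', hτNR, nA3, nB3, nG0, nH0, nGu, nHv,
        nβNA0, nβNB0, nβNB, nβiNP, nA1, nB1, nβNR]
    · -- eta bound
      rw [hH3]
      rcases le_total (1/(2*τ^2)) (2:ℝ) with hc | hc
      · rw [max_eq_right hc]
        have hτhalf : (1:ℝ)/2 ≤ τ := by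
          rw [div_le_iff₀ (by positivity : (0:ℝ) < 2*τ^2)] at hc
          nlinarith only [hc, hτ, mul_pos hτ hτ]
        have m1 : (σ - (τ-1)^2)*β/(2*τ)
            *‖LinearMap.adjoint A (y 1) + LinearMap.adjoint B (z 1) - c‖^2
            ≤ (27/25)*(β*‖LinearMap.adjoint A (y 1) + LinearMap.adjoint B (z 1) - c‖^2) := by
          have hco : (σ - (τ-1)^2)*β/(2*τ) ≤ (27/25)*β := by
            rw [div_le_iff₀ (by positivity : (0:ℝ) < 2*τ)]
            nlinarith only [mul_nonneg (by nlinarith only [hσ1, sq_nonneg (τ-1)] :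
                (0:ℝ) ≤ 1 - (σ - (τ-1)^2)) hβ.le,
              mul_nonneg (by linarith only [hτhalf] : (0:ℝ) ≤ 2*τ - 1) hβ.le, hβ.le]
          calc (σ - (τ-1)^2)*β/(2*τ)
              *‖LinearMap.adjoint A (y 1) + LinearMap.adjoint B (z 1) - c‖^2
              ≤ (27/25)*β*‖LinearMap.adjoint A (y 1) + LinearMap.adjoint B (z 1) - c‖^2 :=
                mul_le_mul_of_nonneg_right hco nNR
            _ = (27/25)*(β*‖LinearMap.adjoint A (y 1) + LinearMap.adjoint B (z 1) - c‖^2) := by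
                ring
        have m2 : σ/2*⟪y 1 - y 0, S (y 1 - y 0)⟫ ≤ (1/2)*⟪y 1 - y 0, S (y 1 - y 0)⟫ :=
          mul_le_mul_of_nonneg_right (by linarith only [hσ1]) nA1
        have m3 : ν/(2*τ)*⟪z 1 - z 0, T₀ (z 1 - z 0)⟫ ≤ 1*⟪z 1 - z 0, T₀ (z 1 - z 0)⟫ :=
          mul_le_mul_of_nonneg_right ((div_le_one (by positivity)).mpr hν2τ) nB1
        have m4 : (σ+τ-1)/τ*⟪z 1 - z 0, SigZ (z 1 - z 0)⟫ ≤ 1*⟪z 1 - z 0, SigZ (z 1 - z 0)⟫ :=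
          mul_le_mul_of_nonneg_right ((div_le_one hτ).mpr (by linarith only [hσ1])) nH1
        have l2τ : (0:ℝ) ≤ 2*τ - 1 := by linarith only [hτhalf]
        linarith only [heta1, m1, m2, m3, m4, hM, hYG, hYH, nGu, nHv, nG0, nH0, nβNB,
          nA1, nB1, nβNR, nA3, nB3, nβNA0, nβNB0, nβiNP,
          mul_nonneg l2τ nA3, mul_nonneg l2τ nB3, mul_nonneg l2τ nG0, mul_nonneg l2τ nH0,
          mul_nonneg l2τ nβNA0, mul_nonneg l2τ nβNB0, mul_nonneg l2τ nβiNP]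
      · rw [max_eq_left hc]
        have hτhalf : τ ≤ 1/2 := by
          rw [le_div_iff₀ (by positivity : (0:ℝ) < 2*τ^2)] at hc
          nlinarith only [hc, hτ, mul_pos hτ hτ]
        have hτinv : 2 ≤ τ⁻¹ := by
          have h1 : τ*τ⁻¹ = 1 := mul_inv_cancel₀ hτne
          linarith only [h1, mul_le_mul_of_nonneg_right hτhalf (inv_nonneg.mpr hτ.le)]
        have hsc : ∀ Q : ℝ, 1/(2*τ^2)*(4*τ*Q) = 2*(τ⁻¹*Q) := fun Q => by
          field_simp
          ring
        rw [hsc]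
        have hMs := mul_le_mul_of_nonneg_left hM (by positivity : (0:ℝ) ≤ 2*τ⁻¹)
        have m1 : (σ - (τ-1)^2)*β/(2*τ)
            *‖LinearMap.adjoint A (y 1) + LinearMap.adjoint B (z 1) - c‖^2
            ≤ (1/2)*(τ⁻¹*β)
              *‖LinearMap.adjoint A (y 1) + LinearMap.adjoint B (z 1) - c‖^2 := by
          have hco : (σ - (τ-1)^2)*β/(2*τ) ≤ (1/2)*(τ⁻¹*β) := by
            rw [div_le_iff₀ (by positivity : (0:ℝ) < 2*τ)]
            have he : (1/2)*(τ⁻¹*β)*(2*τ) = β := by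
              field_simp
            rw [he]
            linarith only [mul_nonneg (by nlinarith only [hσ1, sq_nonneg (τ-1)] :
              (0:ℝ) ≤ 1 - (σ - (τ-1)^2)) hβ.le]
          exact mul_le_mul_of_nonneg_right hco nNR
        have m2 : σ/2*⟪y 1 - y 0, S (y 1 - y 0)⟫ ≤ (1/2)*⟪y 1 - y 0, S (y 1 - y 0)⟫ :=
          mul_le_mul_of_nonneg_right (by linarith only [hσ1]) nA1
        have m3 : ν/(2*τ)*⟪z 1 - z 0, T₀ (z 1 - z 0)⟫ ≤ 1*⟪z 1 - z 0, T₀ (z 1 - z 0)⟫ :=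
          mul_le_mul_of_nonneg_right ((div_le_one (by positivity)).mpr hν2τ) nB1
        have m4 : (σ+τ-1)/τ*⟪z 1 - z 0, SigZ (z 1 - z 0)⟫ ≤ 1*⟪z 1 - z 0, SigZ (z 1 - z 0)⟫ :=
          mul_le_mul_of_nonneg_right ((div_le_one hτ).mpr (by linarith only [hσ1])) nH1
        have li : (0:ℝ) ≤ τ⁻¹ - 2 := by linarith only [hτinv]
        have liτ : (0:ℝ) ≤ τ⁻¹ := by positivity
        linarith only [heta1, m1, m2, m3, m4, hMs, hYG, hYH, nG0, nH0, nGu, nHv, nA1, nB1,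
          mul_nonneg li nA1, mul_nonneg li nB1, mul_nonneg li nGu, mul_nonneg li nHv,
          mul_nonneg li nG0, mul_nonneg li nH0,
          mul_nonneg liτ nA3, mul_nonneg liτ nB3, mul_nonneg liτ nG0, mul_nonneg liτ nH0,
          mul_nonneg liτ nβNA0, mul_nonneg liτ nβNB0, mul_nonneg liτ nβiNP,
          mul_nonneg liτ nβNB, mul_nonneg liτ nβNR]
  -- assemble via the infima
  obtain ⟨w₀, hw₀⟩ := hne
  haveI : Nonempty {w : Y × Z × X // KKT w} := ⟨⟨w₀, hw₀⟩⟩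
  have hKpos : (0:ℝ) < max (1/(2*τ^2)) 2 := lt_of_lt_of_le two_pos (le_max_right _ _)
  have hI2 : 2*d1 ≤ (⨅ w : {w : Y × Z × X // KKT w},
      Real.sqrt (H2sq (w.1.1 - y 0) (w.1.2.1 - z 0) (w.1.2.2 - x 0)))^2 := by
    refine iInf_sqrt_sq_ge _ _ (by linarith) fun w => ?_
    obtain ⟨h1, h2, h3⟩ := (hKKT w.1).mp w.2
    exact (hmain w.1.1 w.1.2.1 w.1.2.2 h1 h2 h3).1
  have hI3 : eta 1 / max (1/(2*τ^2)) 2 ≤ (⨅ w : {w : Y × Z × X // KKT w},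
      Real.sqrt (H3sq (w.1.1 - y 0) (w.1.2.1 - z 0) (w.1.2.2 - x 0)))^2 := by
    refine iInf_sqrt_sq_ge _ _ (div_nonneg hetann hKpos.le) fun w => ?_
    obtain ⟨h1, h2, h3⟩ := (hKKT w.1).mp w.2
    rw [div_le_iff₀ hKpos]
    have := (hmain w.1.1 w.1.2.1 w.1.2.2 h1 h2 h3).2
    linarith only [this]
  constructor
  · linarith only [hI2,
      sq_nonneg (⨅ w : {w : Y × Z × X // KKT w},
        Real.sqrt (H1sq (w.1.1 - y 0) (w.1.2.1 - z 0) (w.1.2.2 - x 0))),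
      sq_nonneg (⨅ w : {w : Y × Z × X // KKT w},
        Real.sqrt (H3sq (w.1.1 - y 0) (w.1.2.1 - z 0) (w.1.2.2 - x 0)))]
  · have h5 : eta 1 ≤ (⨅ w : {w : Y × Z × X // KKT w},
        Real.sqrt (H3sq (w.1.1 - y 0) (w.1.2.1 - z 0) (w.1.2.2 - x 0)))^2
          * max (1/(2*τ^2)) 2 := (div_le_iff₀ hKpos).mp hI3
    linarith only [h5,
      mul_nonneg hKpos.le (sq_nonneg (⨅ w : {w : Y × Z × X // KKT w},
        Real.sqrt (H1sq (w.1.1 - y 0) (w.1.2.1 - z 0) (w.1.2.2 - x 0)))),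
      mul_nonneg hKpos.le (sq_nonneg (⨅ w : {w : Y × Z × X // KKT w},
        Real.sqrt (H2sq (w.1.1 - y 0) (w.1.2.1 - z 0) (w.1.2.2 - x 0))))]
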